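/- A based simplicial map φ : (X, x₀) → (Y, y₀) induces a group homomorphism φ_# : F(X, x₀) → F(Y, y₀) by φ_#([f]) = [φ∘f]; this assignment is functorial (id_# is the identity and (ψ∘φ)_# = ψ_# ∘ φ_#), and contiguity equivalent based simplicial maps induce equal homomorphisms. -/

import Mathlib

structure ASC (V : Type) where
  faces : Set (Finset V)
  down_closed : ∀ ⦃s t : Finset V⦄, s ∈ faces → t ⊆ s → t ∈ faces

variable {U V W : Type}

/-- A vertex map is a simplicial map if it sends every simplex to a simplex. -/
def IsSimplicialMap [DecidableEq W] (K : ASC V) (L : ASC W) (f : V → W) : Prop :=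
  ∀ s ∈ K.faces, s.image f ∈ L.faces

/-- Two maps are contiguous if `f(σ) ∪ g(σ)` is a simplex for every simplex `σ`. -/
def Contiguous [DecidableEq W] (K : ASC V) (L : ASC W) (f g : V → W) : Prop :=
  ∀ s ∈ K.faces, s.image f ∪ s.image g ∈ L.faces

/-- Contiguity equivalence: a finite chain of contiguities through simplicial maps. -/
def ContigEquiv [DecidableEq W] (K : ASC V) (L : ASC W) : (V → W) → (V → W) → Prop :=
  Relation.ReflTransGen (fun a b =>
    IsSimplicialMap K L a ∧ IsSimplicialMap K L b ∧ Contiguous K L a b)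

/-- The categorical product of simplicial complexes. -/
def ASC.prod [DecidableEq V] [DecidableEq W] (K : ASC V) (L : ASC W) : ASC (V × W) where
  faces := {s | s.image Prod.fst ∈ K.faces ∧ s.image Prod.snd ∈ L.faces}
  down_closed := fun _s _t hs hts =>
    ⟨K.down_closed hs.1 (Finset.image_subset_image hts),
     L.down_closed hs.2 (Finset.image_subset_image hts)⟩

/-- The simplicial interval `I_m` on vertices `0, …, m`. -/
def interval (m : ℕ) : ASC ℕ where
  faces := {s | (∀ x ∈ s, x ≤ m) ∧ ∀ x ∈ s, ∀ y ∈ s, x ≤ y + 1}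
  down_closed := fun _s _t hs hts =>
    ⟨fun x hx => hs.1 x (hts hx), fun x hx y hy => hs.2 x (hts hx) y (hts hy)⟩

/-- The vertex map of `α_i : I_{m+1} → I_m`. -/
def alpha (i : ℕ) : ℕ → ℕ := fun s => if s ≤ i then s else s - 1

/-- The categorical product `I_m × I_n`. -/
def prodInterval (m n : ℕ) : ASC (ℕ × ℕ) := (interval m).prod (interval n)

/-- A face sphere: a simplicial map `(I_m × I_n, ∂(I_m × I_n)) → (X, x₀)`. -/
def IsFaceSphere [DecidableEq V] (X : ASC V) (x₀ : V) (m n : ℕ) (f : ℕ × ℕ → V) : Prop :=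
  IsSimplicialMap (prodInterval m n) X f ∧
  ∀ p : ℕ × ℕ, p.1 ≤ m → p.2 ≤ n →
    (p.1 = 0 ∨ p.1 = m ∨ p.2 = 0 ∨ p.2 = n) → f p = x₀

/-- Contiguity equivalence of face spheres, relative the boundary. -/
def FaceContigEquiv [DecidableEq V] (X : ASC V) (x₀ : V) (m n : ℕ) :
    (ℕ × ℕ → V) → (ℕ × ℕ → V) → Prop :=
  Relation.ReflTransGen (fun a b =>
    IsFaceSphere X x₀ m n a ∧ IsFaceSphere X x₀ m n b ∧
      Contiguous (prodInterval m n) X a b)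

/-- The trivial extension `f ∘ (α_m^r × α_n^s)`. -/
def trivExt (m n r s : ℕ) (f : ℕ × ℕ → V) : ℕ × ℕ → V :=
  f ∘ Prod.map ((alpha m)^[r]) ((alpha n)^[s])

/-- Extension-contiguity equivalence of face spheres of possibly different sizes. -/
def ExtContigEquiv [DecidableEq V] (X : ASC V) (x₀ : V) (m n : ℕ) (f : ℕ × ℕ → V)
    (m' n' : ℕ) (g : ℕ × ℕ → V) : Prop :=
  ∃ M N, m ≤ M ∧ m' ≤ M ∧ n ≤ N ∧ n' ≤ N ∧
    FaceContigEquiv X x₀ M N (trivExt m n (M - m) (N - n) f)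
      (trivExt m' n' (M - m') (N - n') g)

/-- The product `f · g` of face spheres: `f` in the lower-left block,
a translate of `g` in the upper-right block, basepoint elsewhere. -/
def fsMul (x₀ : V) (m n : ℕ) (f g : ℕ × ℕ → V) : ℕ × ℕ → V := fun p =>
  if p.1 ≤ m ∧ p.2 ≤ n then f p
  else if m + 1 ≤ p.1 ∧ n + 1 ≤ p.2 then g (p.1 - (m + 1), p.2 - (n + 1))
  else x₀

/-!
Postcomposition with a simplicial map preserves simplicial maps, contiguities and the
boundary condition, hence chains of contiguities of face spheres; trivial extensions and
the block product are defined pointwise, so they commute with it. A chain of based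
contiguities from `φ` to `ψ`, precomposed with a face sphere `f`, is already a chain of
contiguities of face spheres from `φ ∘ f` to `ψ ∘ f` of the same size, so no extension
is needed.
-/

section Pushforward

variable [DecidableEq V] [DecidableEq W]

theorem IsSimplicialMap.comp {K : ASC U} {L : ASC V} {M : ASC W} {f : U → V} {g : V → W}
    (hg : IsSimplicialMap L M g) (hf : IsSimplicialMap K L f) :
    IsSimplicialMap K M (g ∘ f) := fun s hs => by
  simpa only [Finset.image_image] using hg _ (hf s hs)

theorem Contiguous.comp_left {K : ASC U} {L : ASC V} {M : ASC W} {f g : U → V} {φ : V → W}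
    (hφ : IsSimplicialMap L M φ) (hfg : Contiguous K L f g) :
    Contiguous K M (φ ∘ f) (φ ∘ g) := fun s hs => by
  simpa only [Finset.image_union, Finset.image_image] using hφ _ (hfg s hs)

theorem Contiguous.comp_right {K : ASC U} {L : ASC V} {M : ASC W} {φ ψ : V → W} {f : U → V}
    (hφψ : Contiguous L M φ ψ) (hf : IsSimplicialMap K L f) :
    Contiguous K M (φ ∘ f) (ψ ∘ f) := fun s hs => by
  simpa only [Finset.image_image] using hφψ _ (hf s hs)

theorem IsFaceSphere.comp {X : ASC V} {Y : ASC W} {x₀ : V} {φ : V → W} {m n : ℕ}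
    {f : ℕ × ℕ → V} (hφ : IsSimplicialMap X Y φ) (hf : IsFaceSphere X x₀ m n f) :
    IsFaceSphere Y (φ x₀) m n (φ ∘ f) :=
  ⟨hφ.comp hf.1, fun p hm hn hp => congrArg φ (hf.2 p hm hn hp)⟩

theorem FaceContigEquiv.comp {X : ASC V} {Y : ASC W} {x₀ : V} {φ : V → W} {m n : ℕ}
    {f g : ℕ × ℕ → V} (hφ : IsSimplicialMap X Y φ) (hfg : FaceContigEquiv X x₀ m n f g) :
    FaceContigEquiv Y (φ x₀) m n (φ ∘ f) (φ ∘ g) :=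
  Relation.ReflTransGen.lift (φ ∘ ·)
    (fun _ _ ⟨ha, hb, hab⟩ => ⟨ha.comp hφ, hb.comp hφ, hab.comp_left hφ⟩) f g hfg

theorem ExtContigEquiv.comp {X : ASC V} {Y : ASC W} {x₀ : V} {φ : V → W} {m n m' n' : ℕ}
    {f g : ℕ × ℕ → V} (hφ : IsSimplicialMap X Y φ) (hfg : ExtContigEquiv X x₀ m n f m' n' g) :
    ExtContigEquiv Y (φ x₀) m n (φ ∘ f) m' n' (φ ∘ g) :=
  let ⟨M, N, hm, hm', hn, hn', h⟩ := hfg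
  ⟨M, N, hm, hm', hn, hn', h.comp hφ⟩

omit [DecidableEq V] [DecidableEq W] in
theorem comp_fsMul (φ : V → W) (x₀ : V) (m n : ℕ) (f g : ℕ × ℕ → V) :
    φ ∘ fsMul x₀ m n f g = fsMul (φ x₀) m n (φ ∘ f) (φ ∘ g) := by
  funext p
  simp only [fsMul, Function.comp_apply]
  split_ifs <;> rfl

theorem FaceContigEquiv.extContigEquiv {X : ASC V} {x₀ : V} {m n : ℕ} {f g : ℕ × ℕ → V}
    (h : FaceContigEquiv X x₀ m n f g) : ExtContigEquiv X x₀ m n f m n g :=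
  ⟨m, n, le_rfl, le_rfl, le_rfl, le_rfl, by simp only [Nat.sub_self]; exact h⟩

theorem faceContigEquiv_comp_of_basedContig {X : ASC V} {Y : ASC W} {x₀ : V} {y₀ : W}
    {φ ψ : V → W} {m n : ℕ} {f : ℕ × ℕ → V}
    (hφψ : Relation.ReflTransGen (fun a b =>
        (IsSimplicialMap X Y a ∧ a x₀ = y₀) ∧ (IsSimplicialMap X Y b ∧ b x₀ = y₀) ∧
          Contiguous X Y a b) φ ψ)
    (hf : IsFaceSphere X x₀ m n f) :
    FaceContigEquiv Y y₀ m n (φ ∘ f) (ψ ∘ f) :=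
  Relation.ReflTransGen.lift (· ∘ f)
    (fun _ _ ⟨⟨ha, ha₀⟩, ⟨hb, hb₀⟩, hab⟩ =>
      ⟨ha₀ ▸ hf.comp ha, hb₀ ▸ hf.comp hb, hab.comp_right hf.1⟩) φ ψ hφψ

end Pushforward

/-- a based simplicial map `φ` induces a homomorphism of face
groups `φ_#([f]) = [φ ∘ f]`; the assignment is functorial, and contiguity
equivalent based simplicial maps induce equal homomorphisms. -/
theorem induced_hom_functorial {V W : Type} [DecidableEq V] [DecidableEq W]
    (X : ASC V) (Y : ASC W) (x₀ : V) (y₀ : W)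
    (φ : V → W) (hφ : IsSimplicialMap X Y φ) (hb : φ x₀ = y₀) :
    -- composition with φ sends face spheres to face spheres
    (∀ (m n : ℕ) (f : ℕ × ℕ → V), IsFaceSphere X x₀ m n f →
      IsFaceSphere Y y₀ m n (φ ∘ f)) ∧
    -- φ_# is well defined on extension-contiguity classes
    (∀ (m n m' n' : ℕ) (f g : ℕ × ℕ → V), ExtContigEquiv X x₀ m n f m' n' g →
      ExtContigEquiv Y y₀ m n (φ ∘ f) m' n' (φ ∘ g)) ∧
    -- φ_# is multiplicative
    (∀ (m n : ℕ) (f g : ℕ × ℕ → V),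
      φ ∘ fsMul x₀ m n f g = fsMul y₀ m n (φ ∘ f) (φ ∘ g)) ∧
    -- functoriality: identity
    (∀ f : ℕ × ℕ → V, (id : V → V) ∘ f = f) ∧
    -- functoriality: composition
    (∀ (Z : Type) (ψ : W → Z) (f : ℕ × ℕ → V), (ψ ∘ φ) ∘ f = ψ ∘ (φ ∘ f)) ∧
    -- contiguity equivalent based maps induce equal homomorphisms
    (∀ ψ : V → W, ψ x₀ = y₀ →
      Relation.ReflTransGen (fun a b =>
        (IsSimplicialMap X Y a ∧ a x₀ = y₀) ∧ (IsSimplicialMap X Y b ∧ b x₀ = y₀) ∧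
          Contiguous X Y a b) φ ψ →
      ∀ (m n : ℕ) (f : ℕ × ℕ → V), IsFaceSphere X x₀ m n f →
        ExtContigEquiv Y y₀ m n (φ ∘ f) m n (ψ ∘ f)) := by
  subst hb
  refine ⟨fun m n f hf => hf.comp hφ, fun m n m' n' f g hfg => hfg.comp hφ,
    fun m n f g => comp_fsMul φ x₀ m n f g, fun f => rfl, fun Z ψ f => rfl, ?_⟩
  intro ψ _ hφψ m n f hf
  exact (faceContigEquiv_comp_of_basedContig hφψ hf).extContigEquiv
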